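/- arXiv:1802.01112 — 5 statements merged into one kernel-verified Lean document; each statement's English description precedes it below -/
import Mathlib

section
/- For every ξ ∈ ℝⁿ with 0 < |ξ| < ε, the eigenvalue λ₊(ξ) satisfies −4(2−√2)·|ξ|^{2(α−θ)} ≤ λ₊(ξ) ≤ −|ξ|^{2(α−θ)}. -/
/-!
Write `r = ‖ξ‖`, `c = r^{2θ}`, `s = r^{2(α-2θ)}`, `d = 1 + r^{2δ}`, so that
`λ₊ = c / (2d) · (-1 + √(1 - 4sd))` and `c s = r^{2(α-θ)}`. Since `r^{α-2θ} < ε^{α-2θ} = 1/4`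
we have `s < 1/16`, `r < 1` and `d ≤ 2`, hence `x = 4sd ≤ 1`. On `[0, 1]` the elementary bounds
`-x ≤ -1 + √(1 - x) ≤ -x/2` give `-2 r^{2(α-θ)} ≤ λ₊ ≤ -r^{2(α-θ)}`, and `2 ≤ 4(2 - √2)`.
-/

/-- The eigenvalue `λ₊(ξ)` in the real-eigenvalue (low frequency) regime. -/
noncomputable def lamPlus (n : ℕ) (δ α θ : ℝ) (ξ : EuclideanSpace ℝ (Fin n)) : ℝ :=
  ‖ξ‖ ^ (2 * θ) / (2 * (1 + ‖ξ‖ ^ (2 * δ))) *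
    (-1 + Real.sqrt (1 - 4 * ‖ξ‖ ^ (2 * (α - 2 * θ)) * (1 + ‖ξ‖ ^ (2 * δ))))

open Real

theorem neg_le_neg_one_add_sqrt_one_sub {x : ℝ} (h₀ : 0 ≤ x) (h₁ : x ≤ 1) :
    -x ≤ -1 + √(1 - x) := by
  have : 1 - x ≤ √(1 - x) :=
    (le_sqrt (by linarith) (by linarith)).2 (by nlinarith)
  linarith

theorem neg_one_add_sqrt_one_sub_le {x : ℝ} (h : x ≤ 2) : -1 + √(1 - x) ≤ -(x / 2) := by
  have : √(1 - x) ≤ 1 - x / 2 := sqrt_le_iff.2 ⟨by linarith, by nlinarith [sq_nonneg x]⟩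
  linarith

/-- `c / (2d) · (-1 + √(1 - 4sd))` is the larger root of `d λ² + c λ + c² s`. -/
theorem quadratic_root_mem_Icc {c d s : ℝ} (hc : 0 ≤ c) (hd : 0 < d) (hs : 0 ≤ s)
    (hsd : 4 * s * d ≤ 1) :
    c / (2 * d) * (-1 + √(1 - 4 * s * d)) ∈ Set.Icc (-2 * (c * s)) (-(c * s)) := by
  have hcd : 0 ≤ c / (2 * d) := by positivity
  constructor
  · calc -2 * (c * s) = c / (2 * d) * -(4 * s * d) := by field_simp; ring
      _ ≤ _ := mul_le_mul_of_nonneg_left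
          (neg_le_neg_one_add_sqrt_one_sub (by positivity) hsd) hcd
  · calc c / (2 * d) * (-1 + √(1 - 4 * s * d)) ≤ c / (2 * d) * -(4 * s * d / 2) :=
          mul_le_mul_of_nonneg_left (neg_one_add_sqrt_one_sub_le (by linarith)) hcd
      _ = -(c * s) := by field_simp; ring

theorem two_le_four_mul_two_sub_sqrt_two : 2 ≤ 4 * (2 - √2) := by
  nlinarith [sq_sqrt (zero_le_two : (0 : ℝ) ≤ 2), sqrt_nonneg 2]

theorem stmt_1_general (n : ℕ) (δ α θ ε : ℝ)
    (hδ : 0 ≤ δ) (hθα : 2 * θ < α)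
    (hεdef : ε ^ (α - 2 * θ) = 1 / 4) :
    ∀ ξ : EuclideanSpace ℝ (Fin n), 0 < ‖ξ‖ → ‖ξ‖ < ε →
      -4 * (2 - Real.sqrt 2) * ‖ξ‖ ^ (2 * (α - θ)) ≤ lamPlus n δ α θ ξ ∧
        lamPlus n δ α θ ξ ≤ -‖ξ‖ ^ (2 * (α - θ)) := by
  intro ξ hξ hξε
  set r := ‖ξ‖
  have ha : 0 < α - 2 * θ := by linarith
  have hquarter : r ^ (α - 2 * θ) < 1 / 4 :=
    hεdef ▸ rpow_lt_rpow hξ.le hξε ha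
  have hr : r < 1 := by
    rcases (rpow_lt_one_iff_of_pos hξ).1 (by linarith) with h | h
    · linarith
    · exact h.1
  have hs : r ^ (2 * (α - 2 * θ)) < 1 / 16 := by
    rw [mul_comm, rpow_mul hξ.le, rpow_two]
    nlinarith [rpow_pos_of_pos hξ (α - 2 * θ)]
  have hd : r ^ (2 * δ) ≤ 1 := rpow_le_one hξ.le hr.le (by linarith)
  have hcs : r ^ (2 * θ) * r ^ (2 * (α - 2 * θ)) = r ^ (2 * (α - θ)) := by
    rw [← rpow_add hξ]; ring_nf
  obtain ⟨hlow, hup⟩ := quadratic_root_mem_Icc (c := r ^ (2 * θ)) (d := 1 + r ^ (2 * δ))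
    (s := r ^ (2 * (α - 2 * θ))) (by positivity) (by positivity) (by positivity)
    (by nlinarith [rpow_pos_of_pos hξ (2 * (α - 2 * θ))])
  rw [hcs] at hlow hup
  refine ⟨le_trans ?_ hlow, hup⟩
  nlinarith [two_le_four_mul_two_sub_sqrt_two, rpow_pos_of_pos hξ (2 * (α - θ))]

theorem stmt_1 (n : ℕ) (hn : 1 ≤ n) (δ α θ ε : ℝ)
    (hδ : 0 ≤ δ) (hα : 0 < α) (hθ : 0 ≤ θ) (hθα : 2 * θ < α)
    (hε : 0 < ε) (hεdef : ε ^ (α - 2 * θ) = 1 / 4) :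
    ∀ ξ : EuclideanSpace ℝ (Fin n), 0 < ‖ξ‖ → ‖ξ‖ < ε →
      -4 * (2 - Real.sqrt 2) * ‖ξ‖ ^ (2 * (α - θ)) ≤ lamPlus n δ α θ ξ ∧
        lamPlus n δ α θ ξ ≤ -‖ξ‖ ^ (2 * (α - θ)) :=
  stmt_1_general n δ α θ ε hδ hθα hεdef
end

section
/- For every ξ ∈ ℝⁿ with 0 < |ξ| < ε, the difference of the eigenvalues satisfies |ξ|^{2θ}/(2√2) ≤ λ₊(ξ) − λ₋(ξ) ≤ |ξ|^{2θ}. -/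
set_option maxHeartbeats 800000


/-- The eigenvalue `λ₋(ξ)` in the real-eigenvalue (low frequency) regime. -/
noncomputable def lamMinus (n : ℕ) (δ α θ : ℝ) (ξ : EuclideanSpace ℝ (Fin n)) : ℝ :=
  ‖ξ‖ ^ (2 * θ) / (2 * (1 + ‖ξ‖ ^ (2 * δ))) *
    (-1 - Real.sqrt (1 - 4 * ‖ξ‖ ^ (2 * (α - 2 * θ)) * (1 + ‖ξ‖ ^ (2 * δ))))

theorem stmt_3 (n : ℕ) (hn : 1 ≤ n) (δ α θ ε : ℝ)
    (hδ : 0 ≤ δ) (hα : 0 < α) (hθ : 0 ≤ θ) (hθα : 2 * θ < α)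
    (hε : 0 < ε) (hεdef : ε ^ (α - 2 * θ) = 1 / 4) :
    ∀ ξ : EuclideanSpace ℝ (Fin n), 0 < ‖ξ‖ → ‖ξ‖ < ε →
      ‖ξ‖ ^ (2 * θ) / (2 * Real.sqrt 2) ≤ lamPlus n δ α θ ξ - lamMinus n δ α θ ξ ∧
        lamPlus n δ α θ ξ - lamMinus n δ α θ ξ ≤ ‖ξ‖ ^ (2 * θ) := by
  intro ξ hr hrε
  set r : ℝ := ‖ξ‖ with hrdef
  have hp : 0 < α - 2 * θ := by linarith
  have hε1 : ε < 1 := by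
    by_contra h
    push_neg at h
    have : (1:ℝ) ≤ ε ^ (α - 2 * θ) := Real.one_le_rpow h hp.le
    rw [hεdef] at this; linarith
  have hr1 : r < 1 := lt_trans hrε hε1
  set t : ℝ := r ^ (2 * δ) with htdef
  have ht0 : 0 < t := Real.rpow_pos_of_pos hr _
  have ht1 : t ≤ 1 := Real.rpow_le_one hr.le hr1.le (by linarith)
  have hs : r ^ (α - 2 * θ) < 1 / 4 := by
    rw [← hεdef]
    exact Real.rpow_lt_rpow hr.le hrε hp
  have hs0 : 0 < r ^ (α - 2 * θ) := Real.rpow_pos_of_pos hr _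
  have hsq : r ^ (2 * (α - 2 * θ)) = (r ^ (α - 2 * θ)) ^ (2:ℕ) := by
    rw [mul_comm, Real.rpow_mul hr.le]
    norm_cast
  have hs2 : r ^ (2 * (α - 2 * θ)) < 1 / 16 := by
    rw [hsq]; nlinarith
  have hs20 : 0 < r ^ (2 * (α - 2 * θ)) := Real.rpow_pos_of_pos hr _
  set D : ℝ := 1 - 4 * r ^ (2 * (α - 2 * θ)) * (1 + t) with hDdef
  have hDle : D ≤ 1 := by nlinarith
  have hDge : (1 + t) ^ 2 / 8 ≤ D := by nlinarith
  have hD0 : 0 < D := by nlinarith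
  have hrt0 : 0 < r ^ (2 * θ) := Real.rpow_pos_of_pos hr _
  have hs2pos : (0:ℝ) < Real.sqrt 2 := Real.sqrt_pos.mpr (by norm_num)
  have hdiff : lamPlus n δ α θ ξ - lamMinus n δ α θ ξ
      = r ^ (2 * θ) * Real.sqrt D / (1 + t) := by
    unfold lamPlus lamMinus
    rw [← hrdef, ← htdef, ← hDdef]
    field_simp
    ring
  rw [hdiff]
  have hS : (1 + t) / (2 * Real.sqrt 2) ≤ Real.sqrt D := by
    have h0 : (0:ℝ) ≤ (1 + t) / (2 * Real.sqrt 2) := by positivity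
    rw [Real.le_sqrt h0 hD0.le]
    have h2 : (2 * Real.sqrt 2) ^ 2 = 8 := by
      have : Real.sqrt 2 ^ 2 = 2 := Real.sq_sqrt (by norm_num)
      nlinarith
    rw [div_pow, h2]
    exact hDge
  constructor
  · rw [div_le_div_iff₀ (by positivity) (by positivity)]
    have h1 : (1 + t) ≤ Real.sqrt D * (2 * Real.sqrt 2) := by
      rw [div_le_iff₀ (by positivity)] at hS
      linarith
    nlinarith [hrt0.le, Real.sqrt_nonneg D]
  · have h1 : r ^ (2 * θ) * Real.sqrt D / (1 + t) ≤ r ^ (2 * θ) * Real.sqrt D := by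
      apply div_le_self (by positivity) (by linarith)
    have h2 : r ^ (2 * θ) * Real.sqrt D ≤ r ^ (2 * θ) * 1 := by
      gcongr
      exact Real.sqrt_le_one.mpr hDle
    linarith
end

section
/- Let m be a nonnegative integer with n + 2m > 4θ. Then there exists C > 0 (depending only on n, m, δ, α, θ) such that for all t ≥ 0, ∫_{{ξ : 0 < |ξ| < ε}} ((e^{λ₊(ξ)t} − e^{λ₋(ξ)t})² / (λ₊(ξ) − λ₋(ξ))²) · |ξ|^{2m} dξ ≤ C·(1+t)^{−(n/2 + m − 2θ)/(α−θ)}. -/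
open MeasureTheory

/-!
For `0 < |ξ| < ε` the discriminant `x = 4|ξ|^{2(α-2θ)}(1+|ξ|^{2δ})` is at most `1/2`. Then
`√(1-x) ≤ 1 - x/2` gives `λ₋ ≤ λ₊ ≤ -|ξ|^{2(α-θ)}`, while `√(1-x) ≥ 1/2` gives
`λ₊ - λ₋ ≥ |ξ|^{2θ}/4`. Hence the integrand is at most
`16e · |ξ|^{2m-4θ} exp(-(1+t)|ξ|^{2(α-θ)})`, the factor `e` paying for replacing the rate `t`
by `1+t`.
In polar coordinates the integral of this majorant over all of `ℝⁿ` is a Gamma integral, equal to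
a constant times `(1+t)^{-(n+2m-4θ)/(2(α-θ))}`; it is finite because `n + 2m - 4θ > 0`.
-/

open Set Real Metric

lemma eqOn_pow_smul_rpow_mul_exp_neg_mul_rpow {p q b : ℝ} {d : ℕ} (hd : 1 ≤ d) :
    EqOn (fun y : ℝ => y ^ (d - 1) • (y ^ q * exp (-b * y ^ p)))
      (fun y => y ^ (q + d - 1) * exp (-b * y ^ p)) (Ioi 0) := by
  intro y (hy : 0 < y)
  simp only [smul_eq_mul, ← mul_assoc]
  rw [← rpow_natCast, ← rpow_add hy, Nat.cast_sub hd]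
  ring_nf

section RadialIntegral

variable {E : Type*} [NormedAddCommGroup E] [NormedSpace ℝ E] [FiniteDimensional ℝ E]
  [MeasurableSpace E] [Nontrivial E] (μ : Measure E) [μ.IsAddHaarMeasure]
  {p q b : ℝ}

variable (p q) in
noncomputable def radialGammaConst : ℝ :=
  Module.finrank ℝ E * μ.real (ball 0 1) * (1 / p * Gamma ((q + Module.finrank ℝ E) / p))

lemma radialGammaConst_pos (hp : 0 < p) (hq : -(Module.finrank ℝ E : ℝ) < q) :
    0 < radialGammaConst μ p q := by
  have hball : 0 < μ.real (ball 0 1) :=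
    ENNReal.toReal_pos (measure_ball_pos μ 0 one_pos).ne' measure_ball_lt_top.ne
  have hΓ : 0 < Gamma ((q + Module.finrank ℝ E) / p) :=
    Gamma_pos_of_pos (div_pos (by linarith) hp)
  have : (0 : ℝ) < Module.finrank ℝ E := Nat.cast_pos.2 Module.finrank_pos
  unfold radialGammaConst
  positivity

variable [BorelSpace E]

lemma integrable_norm_rpow_mul_exp_neg_mul_norm_rpow (hp : 0 < p) (hb : 0 < b)
    (hq : -(Module.finrank ℝ E : ℝ) < q) :
    Integrable (fun x : E => ‖x‖ ^ q * exp (-b * ‖x‖ ^ p)) μ := by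
  rw [integrable_fun_norm_addHaar μ (f := fun y => y ^ q * exp (-b * y ^ p)),
    integrableOn_congr_fun (eqOn_pow_smul_rpow_mul_exp_neg_mul_rpow Module.finrank_pos)
      measurableSet_Ioi]
  exact integrableOn_rpow_mul_exp_neg_mul_rpow (by linarith) hp hb

lemma integral_norm_rpow_mul_exp_neg_mul_norm_rpow (hp : 0 < p) (hb : 0 < b)
    (hq : -(Module.finrank ℝ E : ℝ) < q) :
    ∫ x : E, ‖x‖ ^ q * exp (-b * ‖x‖ ^ p) ∂μ =
      radialGammaConst μ p q * b ^ (-(q + Module.finrank ℝ E) / p) := by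
  rw [integral_fun_norm_addHaar μ (fun y => y ^ q * exp (-b * y ^ p)),
    setIntegral_congr_fun measurableSet_Ioi
      (eqOn_pow_smul_rpow_mul_exp_neg_mul_rpow Module.finrank_pos),
    integral_rpow_mul_exp_neg_mul_rpow hp (by linarith) hb, radialGammaConst]
  simp only [nsmul_eq_mul, smul_eq_mul, sub_add_cancel]
  ring

lemma setIntegral_le_of_le_mul_norm_rpow_mul_exp {s : Set E} (hs : MeasurableSet s) {f : E → ℝ}
    {c : ℝ} (hc : 0 ≤ c) (hp : 0 < p) (hb : 0 < b) (hq : -(Module.finrank ℝ E : ℝ) < q)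
    (hf0 : ∀ x ∈ s, 0 ≤ f x) (hf : ∀ x ∈ s, f x ≤ c * (‖x‖ ^ q * exp (-b * ‖x‖ ^ p))) :
    ∫ x in s, f x ∂μ ≤ c * (radialGammaConst μ p q * b ^ (-(q + Module.finrank ℝ E) / p)) := by
  have hg := (integrable_norm_rpow_mul_exp_neg_mul_norm_rpow μ hp hb hq).const_mul c
  calc ∫ x in s, f x ∂μ ≤ ∫ x in s, c * (‖x‖ ^ q * exp (-b * ‖x‖ ^ p)) ∂μ :=
        integral_mono_of_nonneg ((ae_restrict_mem hs).mono hf0) hg.integrableOn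
          ((ae_restrict_mem hs).mono hf)
    _ ≤ ∫ x, c * (‖x‖ ^ q * exp (-b * ‖x‖ ^ p)) ∂μ :=
        setIntegral_le_integral hg (ae_of_all _ fun x => by positivity)
    _ = _ := by rw [integral_const_mul, integral_norm_rpow_mul_exp_neg_mul_norm_rpow μ hp hb hq]

end RadialIntegral

lemma sq_exp_mul_sub_exp_mul_le {a c w t : ℝ} (hca : c ≤ a) (haw : a ≤ -w) (hw0 : 0 ≤ w)
    (hw1 : w ≤ 1) (ht : 0 ≤ t) :
    (exp (a * t) - exp (c * t)) ^ 2 ≤ exp 1 * exp (-(1 + t) * w) := by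
  have h0 : 0 ≤ exp (a * t) - exp (c * t) :=
    sub_nonneg.2 (exp_le_exp.2 (mul_le_mul_of_nonneg_right hca ht))
  have h1 : exp (a * t) - exp (c * t) ≤ exp (a * t) := sub_le_self _ (exp_pos _).le
  calc (exp (a * t) - exp (c * t)) ^ 2 ≤ exp (a * t) ^ 2 := pow_le_pow_left₀ h0 h1 2
    _ = exp (2 * (a * t)) := by rw [sq, ← exp_add, two_mul]
    _ ≤ exp (1 + -(1 + t) * w) :=
      exp_le_exp.2 (by nlinarith [mul_nonneg hw0 ht, mul_le_mul_of_nonneg_right haw ht])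
    _ = exp 1 * exp (-(1 + t) * w) := exp_add _ _

section Eigenvalues

variable {n : ℕ} {δ α θ : ℝ} {ξ : EuclideanSpace ℝ (Fin n)}

lemma lamPlus_sub_lamMinus :
    lamPlus n δ α θ ξ - lamMinus n δ α θ ξ = ‖ξ‖ ^ (2 * θ) / (1 + ‖ξ‖ ^ (2 * δ)) *
      √(1 - 4 * ‖ξ‖ ^ (2 * (α - 2 * θ)) * (1 + ‖ξ‖ ^ (2 * δ))) := by
  have : 0 < 1 + ‖ξ‖ ^ (2 * δ) := by positivity
  unfold lamPlus lamMinus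
  field_simp
  ring

lemma lamMinus_le_lamPlus : lamMinus n δ α θ ξ ≤ lamPlus n δ α θ ξ := by
  rw [← sub_nonneg, lamPlus_sub_lamMinus]
  positivity

lemma lamPlus_le_neg_norm_rpow (hξ : 0 < ‖ξ‖)
    (hx : 4 * ‖ξ‖ ^ (2 * (α - 2 * θ)) * (1 + ‖ξ‖ ^ (2 * δ)) ≤ 2) :
    lamPlus n δ α θ ξ ≤ -‖ξ‖ ^ (2 * (α - θ)) := by
  set x := 4 * ‖ξ‖ ^ (2 * (α - 2 * θ)) * (1 + ‖ξ‖ ^ (2 * δ)) with hx_def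
  have hs : √(1 - x) ≤ 1 - x / 2 := sqrt_le_iff.2 ⟨by linarith, by nlinarith [sq_nonneg x]⟩
  have hpow : ‖ξ‖ ^ (2 * θ) * ‖ξ‖ ^ (2 * (α - 2 * θ)) = ‖ξ‖ ^ (2 * (α - θ)) := by
    rw [← rpow_add hξ]
    ring_nf
  calc lamPlus n δ α θ ξ ≤ ‖ξ‖ ^ (2 * θ) / (2 * (1 + ‖ξ‖ ^ (2 * δ))) * -(x / 2) :=
        mul_le_mul_of_nonneg_left (by linarith) (by positivity)
    _ = -‖ξ‖ ^ (2 * (α - θ)) := by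
        rw [← hpow, hx_def]
        field_simp
        ring

lemma norm_rpow_div_four_le_lamPlus_sub_lamMinus (hδ : 0 ≤ δ) (hξ : ‖ξ‖ ≤ 1)
    (hx : 4 * ‖ξ‖ ^ (2 * (α - 2 * θ)) * (1 + ‖ξ‖ ^ (2 * δ)) ≤ 3 / 4) :
    ‖ξ‖ ^ (2 * θ) / 4 ≤ lamPlus n δ α θ ξ - lamMinus n δ α θ ξ := by
  have hu : ‖ξ‖ ^ (2 * δ) ≤ 1 := rpow_le_one (norm_nonneg _) hξ (by linarith)
  have hs : 1 / 2 ≤ √(1 - 4 * ‖ξ‖ ^ (2 * (α - 2 * θ)) * (1 + ‖ξ‖ ^ (2 * δ))) :=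
    (le_sqrt' (by norm_num)).2 (by linarith)
  rw [lamPlus_sub_lamMinus]
  calc ‖ξ‖ ^ (2 * θ) / 4 = ‖ξ‖ ^ (2 * θ) / (1 + 1) * (1 / 2) := by ring
    _ ≤ _ := by gcongr

lemma exp_lamPlus_sub_exp_lamMinus_sq_div_mul_pow_le {t : ℝ} (hδ : 0 ≤ δ) (hθ : 0 ≤ θ)
    (hθα : 2 * θ < α) (ht : 0 ≤ t) (hξ : 0 < ‖ξ‖) (hξε : ‖ξ‖ ^ (α - 2 * θ) < 1 / 4) (m : ℕ) :
    (exp (lamPlus n δ α θ ξ * t) - exp (lamMinus n δ α θ ξ * t)) ^ 2 /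
        (lamPlus n δ α θ ξ - lamMinus n δ α θ ξ) ^ 2 * ‖ξ‖ ^ (2 * m) ≤
      16 * exp 1 * (‖ξ‖ ^ (2 * m - 4 * θ : ℝ) * exp (-(1 + t) * ‖ξ‖ ^ (2 * (α - θ)))) := by
  have hξ1 : ‖ξ‖ < 1 := lt_of_not_ge fun h => by
    linarith [one_le_rpow h (by linarith : 0 ≤ α - 2 * θ)]
  have hv : ‖ξ‖ ^ (2 * (α - 2 * θ)) ≤ 1 / 16 := by
    rw [mul_comm, rpow_mul (norm_nonneg _), rpow_two]
    nlinarith [rpow_nonneg (norm_nonneg ξ) (α - 2 * θ)]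
  have hu : ‖ξ‖ ^ (2 * δ) ≤ 1 := rpow_le_one (norm_nonneg _) hξ1.le (by linarith)
  have hx : 4 * ‖ξ‖ ^ (2 * (α - 2 * θ)) * (1 + ‖ξ‖ ^ (2 * δ)) ≤ 1 / 2 := by
    nlinarith [rpow_nonneg (norm_nonneg ξ) (2 * (α - 2 * θ))]
  have hnum := sq_exp_mul_sub_exp_mul_le lamMinus_le_lamPlus
    (lamPlus_le_neg_norm_rpow hξ (by linarith)) (rpow_nonneg (norm_nonneg ξ) _)
    (rpow_le_one (norm_nonneg _) hξ1.le (by linarith)) ht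
  have hden := pow_le_pow_left₀ (by positivity)
    (norm_rpow_div_four_le_lamPlus_sub_lamMinus (α := α) (θ := θ) hδ hξ1.le (by linarith)) 2
  have hpow : ‖ξ‖ ^ (2 * m - 4 * θ : ℝ) = ‖ξ‖ ^ (2 * m) / (‖ξ‖ ^ (2 * θ)) ^ 2 := by
    rw [rpow_sub hξ, ← rpow_natCast, ← rpow_mul_natCast (norm_nonneg _)]
    push_cast
    ring_nf
  calc _ ≤ exp 1 * exp (-(1 + t) * ‖ξ‖ ^ (2 * (α - θ))) / (‖ξ‖ ^ (2 * θ) / 4) ^ 2 *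
        ‖ξ‖ ^ (2 * m) := by gcongr
    _ = _ := by
        rw [hpow]
        field_simp
        ring

end Eigenvalues

theorem stmt_4_general (n : ℕ) (hn : 1 ≤ n) (δ α θ ε : ℝ)
    (hδ : 0 ≤ δ) (hθ : 0 ≤ θ) (hθα : 2 * θ < α)
    (hεdef : ε ^ (α - 2 * θ) = 1 / 4)
    (m : ℕ) (hm : 4 * θ < (n : ℝ) + 2 * m) :
    ∃ C : ℝ, 0 < C ∧ ∀ t : ℝ, 0 ≤ t →
      (∫ ξ in {ξ : EuclideanSpace ℝ (Fin n) | 0 < ‖ξ‖ ∧ ‖ξ‖ < ε},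
          (Real.exp (lamPlus n δ α θ ξ * t) - Real.exp (lamMinus n δ α θ ξ * t)) ^ 2 /
              (lamPlus n δ α θ ξ - lamMinus n δ α θ ξ) ^ 2 * ‖ξ‖ ^ (2 * m))
        ≤ C * (1 + t) ^ (-((n : ℝ) / 2 + m - 2 * θ) / (α - θ)) := by
  have : Nontrivial (EuclideanSpace ℝ (Fin n)) :=
    Module.nontrivial_of_finrank_pos (R := ℝ) (by rw [finrank_euclideanSpace_fin]; omega)
  have hp : 0 < 2 * (α - θ) := by linarith
  have hq : -(Module.finrank ℝ (EuclideanSpace ℝ (Fin n)) : ℝ) < 2 * m - 4 * θ := by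
    rw [finrank_euclideanSpace_fin]
    linarith
  have hexp : -(2 * m - 4 * θ + Module.finrank ℝ (EuclideanSpace ℝ (Fin n))) / (2 * (α - θ)) =
      -((n : ℝ) / 2 + m - 2 * θ) / (α - θ) := by
    rw [finrank_euclideanSpace_fin]
    field_simp
    ring
  refine ⟨16 * exp 1 * radialGammaConst volume (2 * (α - θ)) (2 * m - 4 * θ),
    mul_pos (by positivity) (radialGammaConst_pos volume hp hq), fun t ht => ?_⟩
  calc _ ≤ 16 * exp 1 * (radialGammaConst volume (2 * (α - θ)) (2 * m - 4 * θ) *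
        (1 + t) ^ (-(2 * m - 4 * θ + Module.finrank ℝ (EuclideanSpace ℝ (Fin n))) /
          (2 * (α - θ)))) := by
        refine setIntegral_le_of_le_mul_norm_rpow_mul_exp volume (measurable_norm measurableSet_Ioo)
          (by positivity) hp (by linarith) hq (fun ξ _ => by positivity) fun ξ hξ => ?_
        refine exp_lamPlus_sub_exp_lamMinus_sq_div_mul_pow_le hδ hθ hθα ht hξ.1 ?_ m
        exact hεdef ▸ rpow_lt_rpow (norm_nonneg _) hξ.2 (by linarith)
    _ = _ := by
        rw [hexp]
        ring

theorem stmt_4 (n : ℕ) (hn : 1 ≤ n) (δ α θ ε : ℝ)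
    (hδ : 0 ≤ δ) (hα : 0 < α) (hθ : 0 ≤ θ) (hθα : 2 * θ < α)
    (hε : 0 < ε) (hεdef : ε ^ (α - 2 * θ) = 1 / 4)
    (m : ℕ) (hm : 4 * θ < (n : ℝ) + 2 * m) :
    ∃ C : ℝ, 0 < C ∧ ∀ t : ℝ, 0 ≤ t →
      (∫ ξ in {ξ : EuclideanSpace ℝ (Fin n) | 0 < ‖ξ‖ ∧ ‖ξ‖ < ε},
          (Real.exp (lamPlus n δ α θ ξ * t) - Real.exp (lamMinus n δ α θ ξ * t)) ^ 2 /
              (lamPlus n δ α θ ξ - lamMinus n δ α θ ξ) ^ 2 * ‖ξ‖ ^ (2 * m))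
        ≤ C * (1 + t) ^ (-((n : ℝ) / 2 + m - 2 * θ) / (α - θ)) :=
  stmt_4_general n hn δ α θ ε hδ hθ hθα hεdef m hm
end

section
/- There exist constants c₁, c₂ > 0 (depending only on δ, α, θ, ε) such that for every ξ ∈ ℝⁿ with 0 < |ξ| < ε, c₁·|ξ|^α ≤ |λ₊(ξ) − λ₋(ξ)| ≤ c₂·|ξ|^α, where |λ₊(ξ) − λ₋(ξ)| = (|ξ|^{2θ}/(1+|ξ|^{2δ}))·√(4|ξ|^{2(α−2θ)}(1+|ξ|^{2δ}) − 1). -/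
private lemma le_of_sq_le_sq' {x y : ℝ} (hx : 0 ≤ x) (hy : 0 ≤ y)
    (h : x * x ≤ y * y) : x ≤ y := by nlinarith

theorem stmt_6 (n : ℕ) (hn : 1 ≤ n) (δ α θ ε : ℝ)
    (hδ : 0 ≤ δ) (hα : 0 ≤ α) (hθ1 : α / 2 ≤ θ) (hθ2 : θ ≤ α) (hθ : 0 < θ)
    (hε0 : 0 < ε) (hε1 : ε < 1) :
    ∃ c₁ c₂ : ℝ, 0 < c₁ ∧ 0 < c₂ ∧
      ∀ ξ : EuclideanSpace ℝ (Fin n), 0 < ‖ξ‖ → ‖ξ‖ < ε →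
        c₁ * ‖ξ‖ ^ α ≤ ‖ξ‖ ^ (2 * θ) / (1 + ‖ξ‖ ^ (2 * δ)) *
            Real.sqrt (4 * ‖ξ‖ ^ (2 * (α - 2 * θ)) * (1 + ‖ξ‖ ^ (2 * δ)) - 1) ∧
          ‖ξ‖ ^ (2 * θ) / (1 + ‖ξ‖ ^ (2 * δ)) *
            Real.sqrt (4 * ‖ξ‖ ^ (2 * (α - 2 * θ)) * (1 + ‖ξ‖ ^ (2 * δ)) - 1)
              ≤ c₂ * ‖ξ‖ ^ α := by
  refine ⟨1, 3, one_pos, by norm_num, fun ξ hr0 hrε => ?_⟩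
  set r := ‖ξ‖ with hr
  have hr1 : r < 1 := hrε.trans hε1
  set a := r ^ (2 * δ) with hadef
  set b := r ^ (2 * (α - 2 * θ)) with hbdef
  set t := r ^ (2 * θ) with htdef
  set p := r ^ α with hpdef
  have ha0 : 0 < a := Real.rpow_pos_of_pos hr0 _
  have ha1 : a ≤ 1 := Real.rpow_le_one hr0.le hr1.le (by linarith)
  have hb1 : (1 : ℝ) ≤ b :=
    Real.one_le_rpow_of_pos_of_le_one_of_nonpos hr0 hr1.le (by linarith)
  have ht0 : 0 < t := Real.rpow_pos_of_pos hr0 _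
  have hp0 : 0 < p := Real.rpow_pos_of_pos hr0 _
  have hkey : t * t * b = p * p := by
    rw [htdef, hbdef, hpdef, ← Real.rpow_add hr0, ← Real.rpow_add hr0,
      ← Real.rpow_add hr0]
    ring_nf
  have hpt : t * t ≤ p * p := by
    rw [htdef, hpdef, ← Real.rpow_add hr0, ← Real.rpow_add hr0]
    exact Real.rpow_le_rpow_of_exponent_ge hr0 hr1.le (by linarith)
  have hS0 : (0 : ℝ) ≤ 4 * b * (1 + a) - 1 := by nlinarith
  set s := Real.sqrt (4 * b * (1 + a) - 1) with hsdef
  have hs0 : 0 ≤ s := Real.sqrt_nonneg _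
  have hss : s * s = 4 * b * (1 + a) - 1 := Real.mul_self_sqrt hS0
  have h1a : (0 : ℝ) < 1 + a := by linarith
  have hts : t * s * (t * s) = 4 * (p * p) * (1 + a) - t * t := by
    calc t * s * (t * s) = t * t * (s * s) := by ring
    _ = 4 * (t * t * b) * (1 + a) - t * t := by rw [hss]; ring
    _ = 4 * (p * p) * (1 + a) - t * t := by rw [hkey]
  constructor
  · rw [div_mul_eq_mul_div, le_div_iff₀ h1a]
    apply le_of_sq_le_sq' (by positivity) (by positivity)
    nlinarith [hts, hpt, mul_pos hp0 hp0,
      mul_nonneg (mul_nonneg hp0.le hp0.le) (mul_nonneg (sub_nonneg.2 ha1) ha0.le)]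
  · rw [div_mul_eq_mul_div, div_le_iff₀ h1a]
    apply le_of_sq_le_sq' (by positivity) (by positivity)
    nlinarith [hts, mul_pos (mul_pos hp0 hp0) h1a, ht0,
      mul_pos (mul_pos (mul_pos hp0 hp0) h1a) ha0]
end

section
/- Assume δ ≤ θ ≤ α. Then there exist constants C > 0 and c > 0 (depending only on n, δ, α, θ, σ, ε) such that for all t ≥ 0, ∫_{{ξ : |ξ| ≥ ε}} E₁(t,ξ) dξ ≤ C·e^{−ct}·( ∫_{ℝⁿ}(1+|ξ|²)^{δ+σ/2}|v̂₁(ξ)|² dξ + ∫_{ℝⁿ}(1+|ξ|²)^{α+σ/2}|v̂₀(ξ)|² dξ ). -/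
/-!
For fixed `ξ` with `|ξ| = r ≥ ε`, the Fourier mode solves the damped oscillator
`a w'' + b w' + k w = 0` with `a = 1 + r^{2δ}`, `b = r^{2θ}`, `k = r^{2α}`. Adding the cross term
`g a ⟪w', w⟫` to the energy `a/2 |w'|² + k/2 |w|²` gives an equivalent functional `F` with
`F' ≤ -(g/2) F` as soon as `4 g a ≤ b` and `4 g b ≤ k`; since `δ ≤ θ ≤ α`, the choice
`g = ε^{2α}/8` works for every `r ≥ ε`, so the energy of each mode decays at a rate independent of
`ξ`. Multiplying by `r^σ`, comparing the weights with `(1 + r²)^{δ+σ/2}`, `(1 + r²)^{α+σ/2}` and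
integrating gives the estimate.
-/

open Set Real MeasureTheory
open scoped RealInnerProductSpace

section DampedOscillator

variable {E : Type*} [NormedAddCommGroup E] [InnerProductSpace ℝ E]

theorem inner_quadratic_nonneg {p q r : ℝ} (hp : 0 < p) (hdisc : q ^ 2 ≤ 4 * p * r) (x y : E) :
    0 ≤ p * ‖x‖ ^ 2 + q * ⟪x, y⟫ + r * ‖y‖ ^ 2 := by
  have hexpand : ‖(2 * p) • x + q • y‖ ^ 2
      = 4 * p * (p * ‖x‖ ^ 2 + q * ⟪x, y⟫ + r * ‖y‖ ^ 2) + (q ^ 2 - 4 * p * r) * ‖y‖ ^ 2 := by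
    rw [norm_add_sq_real, norm_smul, norm_smul, inner_smul_left, inner_smul_right,
      Real.norm_eq_abs, Real.norm_eq_abs, mul_pow, mul_pow, sq_abs, sq_abs]
    simp only [conj_trivial]
    ring
  nlinarith [sq_nonneg ‖(2 * p) • x + q • y‖, sq_nonneg ‖y‖]

noncomputable def oscillatorEnergy (a k : ℝ) (x x' : E) : ℝ :=
  a / 2 * ‖x'‖ ^ 2 + k / 2 * ‖x‖ ^ 2

noncomputable def perturbedEnergy (a k g : ℝ) (x x' : E) : ℝ :=
  oscillatorEnergy a k x x' + g * a * ⟪x', x⟫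

theorem perturbedEnergy_mem_Icc {a k g : ℝ} (ha : 0 < a) (hgk : 16 * g ^ 2 * a ≤ k) (x x' : E) :
    perturbedEnergy a k g x x' ∈
      Icc (3 / 4 * oscillatorEnergy a k x x') (5 / 4 * oscillatorEnergy a k x x') := by
  have hdisc : (g * a) ^ 2 ≤ 4 * (a / 8) * (k / 8) := by nlinarith
  have h₁ := inner_quadratic_nonneg (by positivity) hdisc x' x
  have h₂ := inner_quadratic_nonneg (p := a / 8) (q := -(g * a)) (r := k / 8) (by positivity)
    (by rwa [neg_sq]) x' x
  unfold perturbedEnergy oscillatorEnergy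
  constructor <;> linarith

theorem hasDerivWithinAt_perturbedEnergy {a b k g : ℝ} {z z' : ℝ → E} {v' : E} {s : Set ℝ}
    {t : ℝ} (hz : HasDerivWithinAt z (z' t) s t) (hz' : HasDerivWithinAt z' v' s t)
    (heq : a • v' + b • z' t + k • z t = 0) :
    HasDerivWithinAt (fun u => perturbedEnergy a k g (z u) (z' u))
      (-(b - g * a) * ‖z' t‖ ^ 2 - g * b * ⟪z' t, z t⟫ - g * k * ‖z t‖ ^ 2) s t := by
  have hsubst : a • v' = -(b • z' t + k • z t) :=
    eq_neg_of_add_eq_zero_left (by rw [← heq]; abel)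
  have h₁ : a * ⟪z' t, v'⟫ = -(b * ‖z' t‖ ^ 2) - k * ⟪z' t, z t⟫ := by
    rw [← inner_smul_right, hsubst, inner_neg_right, inner_add_right, inner_smul_right,
      inner_smul_right, real_inner_self_eq_norm_sq]
    ring
  have h₂ : a * ⟪v', z t⟫ = -(b * ⟪z' t, z t⟫) - k * ‖z t‖ ^ 2 := by
    rw [← real_inner_smul_left, hsubst, inner_neg_left, inner_add_left, real_inner_smul_left,
      real_inner_smul_left, real_inner_self_eq_norm_sq]
    ring
  refine (((hz'.norm_sq.const_mul (a / 2)).add (hz.norm_sq.const_mul (k / 2))).add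
    ((hz'.inner ℝ hz).const_mul (g * a))).congr_deriv ?_
  rw [real_inner_self_eq_norm_sq, real_inner_comm (z' t) (z t)]
  linear_combination h₁ + g * h₂

theorem perturbedEnergy_deriv_le {a b k g : ℝ} (ha : 0 < a) (hg : 0 < g) (hab : 4 * g * a ≤ b)
    (hbk : 4 * g * b ≤ k) (x x' : E) :
    -(b - g * a) * ‖x'‖ ^ 2 - g * b * ⟪x', x⟫ - g * k * ‖x‖ ^ 2 ≤
      -(g / 2) * perturbedEnergy a k g x x' := by
  have hb : 0 < b := by nlinarith [mul_pos hg ha]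
  -- the difference of the two sides is this quadratic form in `(x', x)`
  have hp : 0 < b - 5 / 4 * g * a := by nlinarith
  have hdisc : (g * (b - g * a / 2)) ^ 2 ≤ 4 * (b - 5 / 4 * g * a) * (3 / 4 * g * k) := by
    have hq : 0 ≤ b - g * a / 2 := by nlinarith
    have hle : g * (b - g * a / 2) ≤ g * b := by nlinarith [mul_pos hg (mul_pos hg ha)]
    have hgk : 0 ≤ g * k := mul_nonneg hg.le (by nlinarith [mul_pos hg hb])
    calc (g * (b - g * a / 2)) ^ 2 ≤ (g * b) ^ 2 :=
          pow_le_pow_left₀ (mul_nonneg hg.le hq) hle 2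
      _ ≤ (g * b) * (k / 4) := by rw [sq]; gcongr; linarith
      _ ≤ 4 * (b - 5 / 4 * g * a) * (3 / 4 * g * k) := by
        nlinarith [mul_le_mul_of_nonneg_left hab (mul_nonneg hgk hg.le)]
  have := inner_quadratic_nonneg hp hdisc x' x
  unfold perturbedEnergy oscillatorEnergy
  linarith

theorem le_exp_mul_of_hasDerivWithinAt_le {F F' : ℝ → ℝ} {c : ℝ}
    (hF : ∀ t ∈ Ici (0 : ℝ), HasDerivWithinAt F (F' t) (Ici 0) t)
    (hF' : ∀ t ∈ Ici (0 : ℝ), F' t ≤ -c * F t) {t : ℝ} (ht : 0 ≤ t) :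
    F t ≤ exp (-c * t) * F 0 := by
  have hG : ∀ s ∈ Ici (0 : ℝ), HasDerivWithinAt (fun u => exp (c * u) * F u)
      (exp (c * s) * (c * F s + F' s)) (Ici 0) s := fun s hs => by
    have hexp : HasDerivAt (fun u => exp (c * u)) (exp (c * s) * c) s := by
      simpa using ((hasDerivAt_id s).const_mul c).exp
    exact (hexp.hasDerivWithinAt.mul (hF s hs)).congr_deriv (by ring)
  have hanti : AntitoneOn (fun u => exp (c * u) * F u) (Ici 0) := by
    refine antitoneOn_of_hasDerivWithinAt_nonpos (f' := fun s => exp (c * s) * (c * F s + F' s))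
      (convex_Ici 0)
      (fun s hs => (hG s hs).continuousWithinAt) (fun s hs => ?_) (fun s hs => ?_)
    · rw [interior_Ici] at hs ⊢
      exact (hG s (Ioi_subset_Ici_self hs)).mono Ioi_subset_Ici_self
    · rw [interior_Ici] at hs
      exact mul_nonpos_of_nonneg_of_nonpos (exp_nonneg _)
        (by linarith [hF' s (Ioi_subset_Ici_self hs)])
  have hmono := hanti self_mem_Ici ht ht
  simp only [mul_zero, exp_zero, one_mul] at hmono
  calc F t = exp (-c * t) * (exp (c * t) * F t) := by rw [← mul_assoc, ← exp_add]; simp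
    _ ≤ exp (-c * t) * F 0 := by gcongr

theorem oscillatorEnergy_le_of_damped {a b k g : ℝ} (ha : 0 < a) (hg : 0 < g)
    (hab : 4 * g * a ≤ b) (hbk : 4 * g * b ≤ k) {z z' z'' : ℝ → E}
    (hz : ∀ t ∈ Ici (0 : ℝ), HasDerivWithinAt z (z' t) (Ici 0) t)
    (hz' : ∀ t ∈ Ici (0 : ℝ), HasDerivWithinAt z' (z'' t) (Ici 0) t)
    (heq : ∀ t ∈ Ici (0 : ℝ), a • z'' t + b • z' t + k • z t = 0) {t : ℝ} (ht : 0 ≤ t) :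
    oscillatorEnergy a k (z t) (z' t) ≤
      2 * exp (-(g / 2) * t) * oscillatorEnergy a k (z 0) (z' 0) := by
  have hgk : 16 * g ^ 2 * a ≤ k := by nlinarith
  have hdecay := le_exp_mul_of_hasDerivWithinAt_le
    (fun s hs => hasDerivWithinAt_perturbedEnergy (g := g) (hz s hs) (hz' s hs) (heq s hs))
    (fun s _ => perturbedEnergy_deriv_le ha hg hab hbk (z s) (z' s)) ht
  have hFt := (perturbedEnergy_mem_Icc ha hgk (z t) (z' t)).1
  have hF0 := (perturbedEnergy_mem_Icc ha hgk (z 0) (z' 0)).2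
  have hE0 : 0 ≤ oscillatorEnergy a k (z 0) (z' 0) := by
    unfold oscillatorEnergy; have : 0 ≤ k := by nlinarith
    positivity
  calc oscillatorEnergy a k (z t) (z' t)
      ≤ 4 / 3 * perturbedEnergy a k g (z t) (z' t) := by linarith
    _ ≤ 4 / 3 * (exp (-(g / 2) * t) * perturbedEnergy a k g (z 0) (z' 0)) := by gcongr
    _ ≤ 4 / 3 * (exp (-(g / 2) * t) * (5 / 4 * oscillatorEnergy a k (z 0) (z' 0))) := by
      gcongr
    _ ≤ 2 * exp (-(g / 2) * t) * oscillatorEnergy a k (z 0) (z' 0) := by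
      nlinarith [mul_nonneg (exp_pos (-(g / 2) * t)).le hE0]

end DampedOscillator

theorem half_rpow_mul_one_add_rpow_le {ε r p q s : ℝ} (hε0 : 0 < ε) (hε1 : ε ≤ 1) (hr : ε ≤ r)
    (hp : 0 ≤ p) (hpq : p ≤ q) (hqs : q ≤ s) :
    ε ^ s / 2 * (1 + r ^ p) ≤ r ^ q := by
  have hr0 : 0 < r := hε0.trans_le hr
  have hεs : ε ^ s ≤ ε ^ q := rpow_le_rpow_of_exponent_ge hε0 hε1 hqs
  rcases le_total r 1 with hr1 | hr1
  · have : r ^ p ≤ 1 := rpow_le_one hr0.le hr1 hp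
    have : ε ^ q ≤ r ^ q := rpow_le_rpow hε0.le hr (hp.trans hpq)
    nlinarith [rpow_pos_of_pos hε0 s]
  · have : r ^ p ≤ r ^ q := rpow_le_rpow_of_exponent_le hr1 hpq
    have : 1 ≤ r ^ q := one_le_rpow hr1 (hp.trans hpq)
    have : ε ^ s ≤ 1 := rpow_le_one hε0.le hε1 (hp.trans (hpq.trans hqs))
    nlinarith [rpow_pos_of_pos hε0 s]

theorem rpow_mul_rpow_le {ε r q s : ℝ} (hε0 : 0 < ε) (hε1 : ε ≤ 1) (hr : ε ≤ r) (hq : 0 ≤ q)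
    (hqs : q ≤ s) : ε ^ s * r ^ q ≤ r ^ s := by
  have hr0 : 0 < r := hε0.trans_le hr
  calc ε ^ s * r ^ q ≤ ε ^ (s - q) * r ^ q :=
        mul_le_mul_of_nonneg_right (rpow_le_rpow_of_exponent_ge hε0 hε1 (by linarith))
          (rpow_nonneg hr0.le q)
    _ ≤ r ^ (s - q) * r ^ q := by gcongr
    _ = r ^ s := by rw [← rpow_add hr0, sub_add_cancel]

theorem rpow_le_max_one_rpow {m x : ℝ} (hm : 0 < m) (hmx : m ≤ x) (hx : x ≤ 1) (e : ℝ) :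
    x ^ e ≤ max 1 (m ^ e) := by
  rcases le_total 0 e with he | he
  · exact (rpow_le_one (hm.le.trans hmx) hx he).trans (le_max_left _ _)
  · exact (rpow_le_rpow_of_nonpos hm hmx he).trans (le_max_right _ _)

theorem rpow_le_max_mul_one_add_sq_rpow {ε r : ℝ} (hε0 : 0 < ε) (hr : ε ≤ r) (σ : ℝ) :
    r ^ σ ≤ max 1 ((ε ^ 2 / (1 + ε ^ 2)) ^ (σ / 2)) * (1 + r ^ 2) ^ (σ / 2) := by
  have hr0 : 0 < r := hε0.trans_le hr
  have hsplit : r ^ σ = (r ^ 2 / (1 + r ^ 2)) ^ (σ / 2) * (1 + r ^ 2) ^ (σ / 2) := by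
    rw [div_rpow (by positivity) (by positivity), div_mul_cancel₀ _ (by positivity), ← rpow_two,
      ← rpow_mul hr0.le]
    ring_nf
  have hmono : ε ^ 2 / (1 + ε ^ 2) ≤ r ^ 2 / (1 + r ^ 2) := by
    rw [div_le_div_iff₀ (by positivity) (by positivity)]
    nlinarith [pow_le_pow_left₀ hε0.le hr 2]
  rw [hsplit]
  gcongr
  exact rpow_le_max_one_rpow (by positivity) hmono
    ((div_le_one (by positivity)).2 (by linarith)) _

theorem rpow_two_mul_le_one_add_sq_rpow {r e : ℝ} (hr : 0 ≤ r) (he : 0 ≤ e) :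
    r ^ (2 * e) ≤ (1 + r ^ 2) ^ e := by
  rw [rpow_mul hr, rpow_two]
  exact rpow_le_rpow (by positivity) (by linarith) he

theorem rpow_mul_one_add_rpow_le {ε r e : ℝ} (hε0 : 0 < ε) (hr : ε ≤ r) (he : 0 ≤ e) (σ : ℝ) :
    r ^ σ * (1 + r ^ (2 * e)) ≤
      2 * max 1 ((ε ^ 2 / (1 + ε ^ 2)) ^ (σ / 2)) * (1 + r ^ 2) ^ (e + σ / 2) := by
  have hr0 : 0 < r := hε0.trans_le hr
  have hsum : 1 + r ^ (2 * e) ≤ 2 * (1 + r ^ 2) ^ e := by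
    have := one_le_rpow (by nlinarith : (1 : ℝ) ≤ 1 + r ^ 2) he
    linarith [rpow_two_mul_le_one_add_sq_rpow hr0.le he]
  calc r ^ σ * (1 + r ^ (2 * e))
      ≤ max 1 ((ε ^ 2 / (1 + ε ^ 2)) ^ (σ / 2)) * (1 + r ^ 2) ^ (σ / 2) *
          (2 * (1 + r ^ 2) ^ e) := by
        gcongr
        exact rpow_le_max_mul_one_add_sq_rpow hε0 hr σ
    _ = 2 * max 1 ((ε ^ 2 / (1 + ε ^ 2)) ^ (σ / 2)) * (1 + r ^ 2) ^ (e + σ / 2) := by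
        rw [rpow_add (by positivity)]; ring

theorem oscillatorEnergy_symbol_le {ε r δ θ α : ℝ} (hε0 : 0 < ε) (hε1 : ε ≤ 1) (hr : ε ≤ r)
    (hδ : 0 ≤ δ) (hδθ : δ ≤ θ) (hθ : 0 ≤ θ) (hθα : θ ≤ α) {z z' z'' : ℝ → ℂ}
    (hz : ∀ t ∈ Ici (0 : ℝ), HasDerivWithinAt z (z' t) (Ici 0) t)
    (hz' : ∀ t ∈ Ici (0 : ℝ), HasDerivWithinAt z' (z'' t) (Ici 0) t)
    (heq : ∀ t ∈ Ici (0 : ℝ), ((1 + r ^ (2 * δ) : ℝ) : ℂ) * z'' t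
      + ((r ^ (2 * θ) : ℝ) : ℂ) * z' t + ((r ^ (2 * α) : ℝ) : ℂ) * z t = 0)
    {t : ℝ} (ht : 0 ≤ t) :
    oscillatorEnergy (1 + r ^ (2 * δ)) (r ^ (2 * α)) (z t) (z' t) ≤
      2 * exp (-(ε ^ (2 * α) / 8 / 2) * t) *
        oscillatorEnergy (1 + r ^ (2 * δ)) (r ^ (2 * α)) (z 0) (z' 0) := by
  have hr0 : 0 < r := hε0.trans_le hr
  have hab := half_rpow_mul_one_add_rpow_le hε0 hε1 hr (by positivity : 0 ≤ 2 * δ)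
    (by linarith : 2 * δ ≤ 2 * θ) (by linarith : 2 * θ ≤ 2 * α)
  have hbk := rpow_mul_rpow_le hε0 hε1 hr (by positivity : 0 ≤ 2 * θ)
    (by linarith : 2 * θ ≤ 2 * α)
  have := mul_nonneg (rpow_nonneg hε0.le (2 * α)) (rpow_nonneg hr0.le (2 * θ))
  exact oscillatorEnergy_le_of_damped (b := r ^ (2 * θ)) (by positivity) (by positivity)
    (by linarith) (by linarith) hz hz'
    (fun s hs => by simpa only [Complex.real_smul] using heq s hs) ht

theorem weighted_energy_le_of_damped {ε r δ θ α σ : ℝ} (hε0 : 0 < ε) (hε1 : ε ≤ 1) (hr : ε ≤ r)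
    (hδ : 0 ≤ δ) (hδθ : δ ≤ θ) (hθ : 0 ≤ θ) (hθα : θ ≤ α) {z z' z'' : ℝ → ℂ}
    (hz : ∀ t ∈ Ici (0 : ℝ), HasDerivWithinAt z (z' t) (Ici 0) t)
    (hz' : ∀ t ∈ Ici (0 : ℝ), HasDerivWithinAt z' (z'' t) (Ici 0) t)
    (heq : ∀ t ∈ Ici (0 : ℝ), ((1 + r ^ (2 * δ) : ℝ) : ℂ) * z'' t
      + ((r ^ (2 * θ) : ℝ) : ℂ) * z' t + ((r ^ (2 * α) : ℝ) : ℂ) * z t = 0)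
    {t : ℝ} (ht : 0 ≤ t) :
    1 / 2 * r ^ (2 * δ + σ) * ‖z' t‖ ^ 2 + 1 / 2 * r ^ (2 * α + σ) * ‖z t‖ ^ 2 ≤
      2 * max 1 ((ε ^ 2 / (1 + ε ^ 2)) ^ (σ / 2)) * exp (-(ε ^ (2 * α) / 8 / 2) * t) *
        ((1 + r ^ 2) ^ (δ + σ / 2) * ‖z' 0‖ ^ 2 + (1 + r ^ 2) ^ (α + σ / 2) * ‖z 0‖ ^ 2) := by
  have hr0 : 0 < r := hε0.trans_le hr
  have hdecay := oscillatorEnergy_symbol_le hε0 hε1 hr hδ hδθ hθ hθα hz hz' heq ht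
  unfold oscillatorEnergy at hdecay
  have hw₁ := rpow_mul_one_add_rpow_le hε0 hr hδ σ
  have hw₀ := rpow_mul_one_add_rpow_le hε0 hr (hθ.trans hθα) σ
  set M := max 1 ((ε ^ 2 / (1 + ε ^ 2)) ^ (σ / 2))
  set e := exp (-(ε ^ (2 * α) / 8 / 2) * t)
  set a := 1 + r ^ (2 * δ)
  set k := r ^ (2 * α)
  have he : 0 < e := exp_pos _
  have hrσ := rpow_nonneg hr0.le σ
  rw [rpow_add hr0, rpow_add hr0]
  calc 1 / 2 * (r ^ (2 * δ) * r ^ σ) * ‖z' t‖ ^ 2 + 1 / 2 * (k * r ^ σ) * ‖z t‖ ^ 2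
      ≤ r ^ σ * (a / 2 * ‖z' t‖ ^ 2 + k / 2 * ‖z t‖ ^ 2) := by
        nlinarith [mul_nonneg hrσ (sq_nonneg ‖z' t‖)]
    _ ≤ r ^ σ * (2 * e * (a / 2 * ‖z' 0‖ ^ 2 + k / 2 * ‖z 0‖ ^ 2)) := by gcongr
    _ ≤ e * (r ^ σ * a * ‖z' 0‖ ^ 2 + r ^ σ * (1 + k) * ‖z 0‖ ^ 2) := by
        nlinarith [mul_nonneg (mul_nonneg he.le hrσ) (sq_nonneg ‖z 0‖)]
    _ ≤ e * (2 * M * (1 + r ^ 2) ^ (δ + σ / 2) * ‖z' 0‖ ^ 2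
          + 2 * M * (1 + r ^ 2) ^ (α + σ / 2) * ‖z 0‖ ^ 2) := by gcongr
    _ = 2 * M * e *
          ((1 + r ^ 2) ^ (δ + σ / 2) * ‖z' 0‖ ^ 2 + (1 + r ^ 2) ^ (α + σ / 2) * ‖z 0‖ ^ 2) := by
        ring

theorem setLIntegral_ofReal_le_mul_add {X : Type*} [MeasurableSpace X] {μ : Measure X}
    {S : Set X} (hS : MeasurableSet S) {f g₁ g₀ : X → ℝ} {K : ℝ} (hK : 0 ≤ K)
    (hg₁ : AEMeasurable (fun x => ENNReal.ofReal (g₁ x)) (μ.restrict S))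
    (hg₁0 : ∀ x ∈ S, 0 ≤ g₁ x) (hg₀0 : ∀ x ∈ S, 0 ≤ g₀ x)
    (hle : ∀ x ∈ S, f x ≤ K * (g₁ x + g₀ x)) :
    ∫⁻ x in S, ENNReal.ofReal (f x) ∂μ ≤
      ENNReal.ofReal K * (∫⁻ x, ENNReal.ofReal (g₁ x) ∂μ + ∫⁻ x, ENNReal.ofReal (g₀ x) ∂μ) := by
  calc ∫⁻ x in S, ENNReal.ofReal (f x) ∂μ
      ≤ ∫⁻ x in S, ENNReal.ofReal K * (ENNReal.ofReal (g₁ x) + ENNReal.ofReal (g₀ x)) ∂μ := by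
        refine setLIntegral_mono' hS fun x hx => ?_
        rw [← ENNReal.ofReal_add (hg₁0 x hx) (hg₀0 x hx), ← ENNReal.ofReal_mul hK]
        exact ENNReal.ofReal_le_ofReal (hle x hx)
    _ = ENNReal.ofReal K * (∫⁻ x in S, ENNReal.ofReal (g₁ x) ∂μ
          + ∫⁻ x in S, ENNReal.ofReal (g₀ x) ∂μ) := by
        rw [lintegral_const_mul' _ _ ENNReal.ofReal_ne_top, lintegral_add_left' hg₁]
    _ ≤ _ := by gcongr <;> exact Measure.restrict_le_self

theorem stmt_12_general (n : ℕ) (δ α θ σ ε : ℝ)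
    (hδ : 0 ≤ δ) (hθ0 : 0 ≤ θ) (hθα : θ ≤ α)
    (hε0 : 0 < ε) (hε1 : ε < 1)
    (v0 v1 : EuclideanSpace ℝ (Fin n) → ℂ)
    (w w' w'' : ℝ → EuclideanSpace ℝ (Fin n) → ℂ)
    (hmeas : ∀ t : ℝ, Measurable (w t) ∧ Measurable (w' t))
    (hd1 : ∀ ξ : EuclideanSpace ℝ (Fin n), ε ≤ ‖ξ‖ → ∀ t : ℝ, 0 ≤ t →
      HasDerivWithinAt (fun s => w s ξ) (w' t ξ) (Set.Ici 0) t)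
    (hd2 : ∀ ξ : EuclideanSpace ℝ (Fin n), ε ≤ ‖ξ‖ → ∀ t : ℝ, 0 ≤ t →
      HasDerivWithinAt (fun s => w' s ξ) (w'' t ξ) (Set.Ici 0) t)
    (heq : ∀ ξ : EuclideanSpace ℝ (Fin n), ε ≤ ‖ξ‖ → ∀ t : ℝ, 0 ≤ t →
      ((1 + ‖ξ‖ ^ (2 * δ) : ℝ) : ℂ) * w'' t ξ + ((‖ξ‖ ^ (2 * θ) : ℝ) : ℂ) * w' t ξ
        + ((‖ξ‖ ^ (2 * α) : ℝ) : ℂ) * w t ξ = 0)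
    (hw0 : ∀ ξ : EuclideanSpace ℝ (Fin n), ε ≤ ‖ξ‖ → w 0 ξ = v0 ξ)
    (hw1 : ∀ ξ : EuclideanSpace ℝ (Fin n), ε ≤ ‖ξ‖ → w' 0 ξ = v1 ξ)
    (hδθ : δ ≤ θ) :
    ∃ C : ℝ, 0 < C ∧ ∃ c : ℝ, 0 < c ∧ ∀ t : ℝ, 0 ≤ t →
      (∫⁻ ξ in {ξ : EuclideanSpace ℝ (Fin n) | ε ≤ ‖ξ‖},
          ENNReal.ofReal (1 / 2 * ‖ξ‖ ^ (2 * δ + σ) * ‖w' t ξ‖ ^ 2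
            + 1 / 2 * ‖ξ‖ ^ (2 * α + σ) * ‖w t ξ‖ ^ 2))
        ≤ ENNReal.ofReal (C * Real.exp (-c * t)) *
          ((∫⁻ ξ : EuclideanSpace ℝ (Fin n),
              ENNReal.ofReal ((1 + ‖ξ‖ ^ 2) ^ (δ + σ / 2) * ‖v1 ξ‖ ^ 2))
            + ∫⁻ ξ : EuclideanSpace ℝ (Fin n),
              ENNReal.ofReal ((1 + ‖ξ‖ ^ 2) ^ (α + σ / 2) * ‖v0 ξ‖ ^ 2)) := by
  refine ⟨2 * max 1 ((ε ^ 2 / (1 + ε ^ 2)) ^ (σ / 2)), by positivity, ε ^ (2 * α) / 8 / 2,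
    by positivity, fun t ht => ?_⟩
  have hS : MeasurableSet {ξ : EuclideanSpace ℝ (Fin n) | ε ≤ ‖ξ‖} :=
    measurableSet_le measurable_const measurable_norm
  have hv1 : AEMeasurable (fun ξ => ENNReal.ofReal ((1 + ‖ξ‖ ^ 2) ^ (δ + σ / 2) * ‖v1 ξ‖ ^ 2))
      (volume.restrict {ξ : EuclideanSpace ℝ (Fin n) | ε ≤ ‖ξ‖}) := by
    have hw'0 := (hmeas 0).2
    refine AEMeasurable.congr (f := fun ξ => ENNReal.ofReal ((1 + ‖ξ‖ ^ 2) ^ (δ + σ / 2) *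
      ‖w' 0 ξ‖ ^ 2)) (by fun_prop) (ae_restrict_of_forall_mem hS fun ξ hξ => ?_)
    simp only [hw1 ξ hξ]
  refine setLIntegral_ofReal_le_mul_add hS (by positivity) hv1 (fun _ _ => by positivity)
    (fun _ _ => by positivity) fun ξ hξ => ?_
  rw [← hw0 ξ hξ, ← hw1 ξ hξ]
  exact weighted_energy_le_of_damped hε0 hε1.le hξ hδ hδθ hθ0 hθα (hd1 ξ hξ) (hd2 ξ hξ)
    (heq ξ hξ) ht

theorem stmt_12 (n : ℕ) (hn : 1 ≤ n) (δ α θ σ ε : ℝ)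
    (hδ : 0 ≤ δ) (hα : 0 ≤ α) (hθ0 : 0 ≤ θ) (hθα : θ ≤ α)
    (hε0 : 0 < ε) (hε1 : ε < 1)
    (v0 v1 : EuclideanSpace ℝ (Fin n) → ℂ)
    (w w' w'' : ℝ → EuclideanSpace ℝ (Fin n) → ℂ)
    (hmeas : ∀ t : ℝ, Measurable (w t) ∧ Measurable (w' t))
    (hd1 : ∀ ξ : EuclideanSpace ℝ (Fin n), ε ≤ ‖ξ‖ → ∀ t : ℝ, 0 ≤ t →
      HasDerivWithinAt (fun s => w s ξ) (w' t ξ) (Set.Ici 0) t)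
    (hd2 : ∀ ξ : EuclideanSpace ℝ (Fin n), ε ≤ ‖ξ‖ → ∀ t : ℝ, 0 ≤ t →
      HasDerivWithinAt (fun s => w' s ξ) (w'' t ξ) (Set.Ici 0) t)
    (hcont : ∀ ξ : EuclideanSpace ℝ (Fin n), ε ≤ ‖ξ‖ →
      ContinuousOn (fun t => w'' t ξ) (Set.Ici 0))
    (heq : ∀ ξ : EuclideanSpace ℝ (Fin n), ε ≤ ‖ξ‖ → ∀ t : ℝ, 0 ≤ t →
      ((1 + ‖ξ‖ ^ (2 * δ) : ℝ) : ℂ) * w'' t ξ + ((‖ξ‖ ^ (2 * θ) : ℝ) : ℂ) * w' t ξ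
        + ((‖ξ‖ ^ (2 * α) : ℝ) : ℂ) * w t ξ = 0)
    (hw0 : ∀ ξ : EuclideanSpace ℝ (Fin n), ε ≤ ‖ξ‖ → w 0 ξ = v0 ξ)
    (hw1 : ∀ ξ : EuclideanSpace ℝ (Fin n), ε ≤ ‖ξ‖ → w' 0 ξ = v1 ξ)
    (hδθ : δ ≤ θ) :
    ∃ C : ℝ, 0 < C ∧ ∃ c : ℝ, 0 < c ∧ ∀ t : ℝ, 0 ≤ t →
      (∫⁻ ξ in {ξ : EuclideanSpace ℝ (Fin n) | ε ≤ ‖ξ‖},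
          ENNReal.ofReal (1 / 2 * ‖ξ‖ ^ (2 * δ + σ) * ‖w' t ξ‖ ^ 2
            + 1 / 2 * ‖ξ‖ ^ (2 * α + σ) * ‖w t ξ‖ ^ 2))
        ≤ ENNReal.ofReal (C * Real.exp (-c * t)) *
          ((∫⁻ ξ : EuclideanSpace ℝ (Fin n),
              ENNReal.ofReal ((1 + ‖ξ‖ ^ 2) ^ (δ + σ / 2) * ‖v1 ξ‖ ^ 2))
            + ∫⁻ ξ : EuclideanSpace ℝ (Fin n),
              ENNReal.ofReal ((1 + ‖ξ‖ ^ 2) ^ (α + σ / 2) * ‖v0 ξ‖ ^ 2)) :=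
  stmt_12_general n δ α θ σ ε hδ hθ0 hθα hε0 hε1 v0 v1 w w' w'' hmeas hd1 hd2 heq hw0 hw1 hδθ
end
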